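/- arXiv:2412.08843 — 5 statements merged into one kernel-verified Lean document; each statement's English description precedes it below -/
import Mathlib

section
/- Let f(φ) = (σ̄₁² ∨ φ)/(T φ²) + (σ̄₂² ∨ (φ + Δ̄₂))/(T (φ + Δ̄₂)²) with unique root φ* of f(φ)=1 in (1/T, 1). If 0 < δ < 1/2 and φ_δ satisfies f(φ_δ) = 1 + δ, and moreover the first summand dominates at φ*, i.e. (σ̄₁² ∨ φ*)/(T (φ*)²) ≥ 1/2, then writing φ_δ = (1 − δ̄) φ* with δ̄ ≥ 0, one has δ̄ ≤ 2δ. -/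
/-!
Write `φ_δ = s φ*` with `s = 1 - δ̄ ∈ (0, 1]`. The second summand is antitone in `φ`, so at `φ_δ`
it is still at least its value `1 - a` at `φ*`, where `a` is the first summand at `φ*`. Since
`s · max(σ̄₁², φ) ≤ max(σ̄₁², s φ)`, the first summand at `φ_δ` is at least `a / s`. Hence
`a / s + 1 - a ≤ 1 + δ`, i.e. `a δ̄ ≤ (1 - δ̄) δ ≤ δ`, and `a ≥ 1/2` gives `δ̄ ≤ 2δ`.
-/

theorem max_div_mul_sq_antitoneOn {c : ℝ} (hc : 0 ≤ c) {T : ℝ} (hT : 0 < T) :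
    AntitoneOn (fun x => max c x / (T * x ^ 2)) (Set.Ioi 0) := by
  intro x (hx : 0 < x) y (hy : 0 < y) hxy
  have split : ∀ z, 0 < z → max c z / (T * z ^ 2) = max (c / (T * z ^ 2)) (1 / (T * z)) := by
    intro z hz
    rw [← max_div_div_right (by positivity)]
    congr 1
    field_simp
  simp only [split x hx, split y hy]
  gcongr

theorem max_div_mul_sq_le_mul_of_scale {c : ℝ} (hc : 0 ≤ c) {T : ℝ} (hT : 0 ≤ T) {s x : ℝ}
    (hs : 0 < s) (hs1 : s ≤ 1) (hx : 0 < x) :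
    max c x / (T * x ^ 2) ≤ s * (max c (s * x) / (T * (s * x) ^ 2)) := by
  have hmax : s * max c x ≤ max c (s * x) := by
    rw [mul_max_of_nonneg _ _ hs.le]
    exact max_le_max (mul_le_of_le_one_left hc hs1) le_rfl
  calc max c x / (T * x ^ 2) = s * (s * max c x / (T * (s * x) ^ 2)) := by
        field_simp
    _ ≤ s * (max c (s * x) / (T * (s * x) ^ 2)) := by
        gcongr

theorem perturbation_case_one_general (σ1 σ2 Δ T δ δbar φs φδ : ℝ)
    (hΔ : 0 ≤ Δ) (hT : 2 ≤ T)
    (f : ℝ → ℝ)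
    (hf : ∀ φ, f φ = max (σ1 ^ 2) φ / (T * φ ^ 2)
      + max (σ2 ^ 2) (φ + Δ) / (T * (φ + Δ) ^ 2))
    (hroot : f φs = 1) (hφs : φs ∈ Set.Ioo (1 / T) 1)
    (hφδpos : 0 < φδ) (hφδ : f φδ = 1 + δ)
    (hdom : 1 / 2 ≤ max (σ1 ^ 2) φs / (T * φs ^ 2))
    (heq : φδ = (1 - δbar) * φs) (hδbar : 0 ≤ δbar) :
    δbar ≤ 2 * δ := by
  have hT0 : 0 < T := by linarith
  have hφs0 : 0 < φs := lt_trans (by positivity) hφs.1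
  have hs : 0 < 1 - δbar := (pos_iff_pos_of_mul_pos (heq ▸ hφδpos)).mpr hφs0
  have second_ge : max (σ2 ^ 2) (φs + Δ) / (T * (φs + Δ) ^ 2)
      ≤ max (σ2 ^ 2) (φδ + Δ) / (T * (φδ + Δ) ^ 2) :=
    max_div_mul_sq_antitoneOn (sq_nonneg σ2) hT0 (show 0 < φδ + Δ by positivity)
      (show 0 < φs + Δ by positivity) (by nlinarith)
  have first_ge := max_div_mul_sq_le_mul_of_scale (sq_nonneg σ1) hT0.le hs (by linarith) hφs0
  rw [← heq] at first_ge
  rw [hf] at hroot hφδ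
  set a := max (σ1 ^ 2) φs / (T * φs ^ 2)
  have first_le : max (σ1 ^ 2) φδ / (T * φδ ^ 2) ≤ a + δ := by linarith
  have key : a * δbar ≤ (1 - δbar) * δ := by nlinarith
  nlinarith

/-- Perturbation bound in the case where the first summand dominates: if `f(φ*) = 1` with
`φ* ∈ (1/T,1)`, `f(φ_δ) = 1 + δ` with `0 < δ < 1/2`, the first summand at `φ*` is at least `1/2`,
and `φ_δ = (1 - δ̄)φ*` with `δ̄ ≥ 0`, then `δ̄ ≤ 2δ`. -/
theorem perturbation_case_one (σ1 σ2 Δ T δ δbar φs φδ : ℝ)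
    (hσ1 : 0 ≤ σ1) (hσ2 : 0 ≤ σ2) (hΔ : 0 ≤ Δ) (hT : 2 ≤ T)
    (f : ℝ → ℝ)
    (hf : ∀ φ, f φ = max (σ1 ^ 2) φ / (T * φ ^ 2)
      + max (σ2 ^ 2) (φ + Δ) / (T * (φ + Δ) ^ 2))
    (hroot : f φs = 1) (hφs : φs ∈ Set.Ioo (1 / T) 1)
    (hδpos : 0 < δ) (hδlt : δ < 1 / 2)
    (hφδpos : 0 < φδ) (hφδ : f φδ = 1 + δ)
    (hdom : 1 / 2 ≤ max (σ1 ^ 2) φs / (T * φs ^ 2))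
    (heq : φδ = (1 - δbar) * φs) (hδbar : 0 ≤ δbar) :
    δbar ≤ 2 * δ :=
  perturbation_case_one_general σ1 σ2 Δ T δ δbar φs φδ hΔ hT f hf hroot hφs hφδpos hφδ hdom heq
    hδbar
end

section
/- Let μ, σ, Δ > 0 with σ > μ ≥ σ − Δ, 0 < Δ < (μ²+σ²)/μ − 2μ, and Δ ≤ σ/2. Define σ̃ ≥ 0 by ((μ+Δ)² + σ̃²)/(μ+Δ) = (μ²+σ²)/μ. Then σ̃ is well-defined (the equation has a unique nonnegative solution) and σ̃ > σ. -/
/-! Clearing the denominator, the equation reads `s² = K` with `K = (μ+Δ)((μ²+σ²)/μ - (μ+Δ))`,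
and `K - σ² = Δ((μ²+σ²)/μ - 2μ - Δ)`, which is positive under the upper bound on `Δ`.
So `σ̃ = √K` is the unique nonnegative solution, and `σ̃² > σ²` gives `σ̃ > σ`. -/

lemma sq_add_sq_div_eq_iff {m c : ℝ} (hm : m ≠ 0) (s : ℝ) :
    (m ^ 2 + s ^ 2) / m = c ↔ s ^ 2 = m * (c - m) := by
  rw [div_eq_iff hm]
  constructor <;> intro h <;> linarith

lemma existsUnique_nonneg_sq_eq {K : ℝ} (hK : 0 ≤ K) : ∃! s : ℝ, 0 ≤ s ∧ s ^ 2 = K :=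
  ⟨√K, ⟨Real.sqrt_nonneg K, Real.sq_sqrt hK⟩,
    fun _ ⟨hs, hsK⟩ => by rw [← hsK, Real.sqrt_sq hs]⟩

lemma add_mul_sub_add_eq {μ σ c : ℝ} (hc : μ * c = μ ^ 2 + σ ^ 2) (Δ : ℝ) :
    (μ + Δ) * (c - (μ + Δ)) = σ ^ 2 + Δ * (c - 2 * μ - Δ) := by
  linear_combination hc

theorem sigma_tilde_well_defined_general (μ σ Δ : ℝ) (hμ : 0 < μ) (hΔ : 0 < Δ)
    (hΔub : Δ < (μ ^ 2 + σ ^ 2) / μ - 2 * μ) :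
    (∃! s : ℝ, 0 ≤ s ∧ ((μ + Δ) ^ 2 + s ^ 2) / (μ + Δ) = (μ ^ 2 + σ ^ 2) / μ) ∧
    (∀ s : ℝ, 0 ≤ s → ((μ + Δ) ^ 2 + s ^ 2) / (μ + Δ) = (μ ^ 2 + σ ^ 2) / μ → σ < s) := by
  set c := (μ ^ 2 + σ ^ 2) / μ
  have hc : μ * c = μ ^ 2 + σ ^ 2 := mul_div_cancel₀ _ hμ.ne'
  have hσK : σ ^ 2 < (μ + Δ) * (c - (μ + Δ)) := by
    rw [add_mul_sub_add_eq hc]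
    exact lt_add_of_pos_right _ (mul_pos hΔ (by linarith))
  simp only [sq_add_sq_div_eq_iff (by linarith : μ + Δ ≠ 0)]
  exact ⟨existsUnique_nonneg_sq_eq ((sq_nonneg σ).trans hσK.le),
    fun s hs hsK => lt_of_pow_lt_pow_left₀ 2 hs (hsK ▸ hσK)⟩

/-- Under the stated conditions the equation `((μ+Δ)² + s²)/(μ+Δ) = (μ²+σ²)/μ` has a unique
nonnegative solution `s = σ̃`, and moreover every such solution satisfies `σ̃ > σ`. -/
theorem sigma_tilde_well_defined (μ σ Δ : ℝ) (hμ : 0 < μ) (hσ : 0 < σ) (hΔ : 0 < Δ)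
    (hσμ : μ < σ) (hμσΔ : σ - Δ ≤ μ) (hΔub : Δ < (μ ^ 2 + σ ^ 2) / μ - 2 * μ)
    (hΔσ : Δ ≤ σ / 2) :
    (∃! s : ℝ, 0 ≤ s ∧ ((μ + Δ) ^ 2 + s ^ 2) / (μ + Δ) = (μ ^ 2 + σ ^ 2) / μ) ∧
    (∀ s : ℝ, 0 ≤ s → ((μ + Δ) ^ 2 + s ^ 2) / (μ + Δ) = (μ ^ 2 + σ ^ 2) / μ → σ < s) :=
  sigma_tilde_well_defined_general μ σ Δ hμ hΔ hΔub
end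

section
/- Let μ, σ, Δ > 0 satisfy σ > μ ≥ σ − Δ and Δ ≤ σ/2, with 0 < Δ < (μ²+σ²)/μ − 2μ. Let Q = Q_{μ,σ} be the two-point distribution on {0, (μ²+σ²)/μ} with mean μ, variance σ², and let Q^Δ be its Δ-modification on the same support with mean μ+Δ (obtained by replacing (μ, σ) with (μ+Δ, σ̃) where ((μ+Δ)²+σ̃²)/(μ+Δ) = (μ²+σ²)/μ). Then the Kullback–Leibler divergence satisfies KL(Q ‖ Q^Δ) ≤ 4Δ²/σ². -/
/-!
Both laws are two-point laws on `{0, b}` with `b = (μ² + σ²)/μ`, i.e. Bernoulli laws scaled by `b`,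
with success probabilities `μ/b` and `(μ + Δ)/b`. The KL divergence is bounded by the
χ²-divergence (from `log x ≤ x - 1`), which for these two laws equals `Δ²/σ̃²`; finally
`σ̃² ≥ σ² - μΔ ≥ σ²/2`.
-/

open Real

lemma mul_log_div_le_sq_div_sub {q p : ℝ} (hq : 0 ≤ q) (hp : 0 < p) :
    q * log (q / p) ≤ q ^ 2 / p - q := by
  rcases hq.eq_or_lt with rfl | hq
  · simp
  calc q * log (q / p) ≤ q * (q / p - 1) :=
        mul_le_mul_of_nonneg_left (log_le_sub_one_of_pos (by positivity)) hq.le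
    _ = q ^ 2 / p - q := by ring

theorem bernoulli_kl_le_chiSq {q p : ℝ} (hq₀ : 0 ≤ q) (hq₁ : q ≤ 1) (hp₀ : 0 < p) (hp₁ : p < 1) :
    (1 - q) * log ((1 - q) / (1 - p)) + q * log (q / p) ≤ (q - p) ^ 2 / (p * (1 - p)) := by
  have hp₁' : 0 < 1 - p := sub_pos.2 hp₁
  calc _ ≤ ((1 - q) ^ 2 / (1 - p) - (1 - q)) + (q ^ 2 / p - q) :=
        add_le_add (mul_log_div_le_sq_div_sub (sub_nonneg.2 hq₁) hp₁')
          (mul_log_div_le_sq_div_sub hq₀ hp₀)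
    _ = (q - p) ^ 2 / (p * (1 - p)) := by field_simp; ring

/-- The two-point law on `{0, b}` with mean `m` has variance `v = m (b - m)`; its masses at `0`
and `b` are `1 - m/b` and `m/b`. -/
lemma twoPoint_masses_of_variance_eq {m v b : ℝ} (hm : m ≠ 0) (hb : b ≠ 0)
    (hv : v = m * (b - m)) : v / (m ^ 2 + v) = 1 - m / b ∧ m ^ 2 / (m ^ 2 + v) = m / b := by
  have hsum : m ^ 2 + v = m * b := by rw [hv]; ring
  rw [hsum]
  constructor <;> field_simp
  linear_combination hv

lemma bernoulli_chiSq_div_eq {m m' b : ℝ} (hm' : m' ≠ 0) (hb : b ≠ 0) (hbm' : b - m' ≠ 0) :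
    (m / b - m' / b) ^ 2 / (m' / b * (1 - m' / b)) = (m - m') ^ 2 / (m' * (b - m')) := by
  have hb' : 1 - m' / b = (b - m') / b := by field_simp
  rw [hb']
  field_simp

lemma sq_div_two_le_modified_variance {μ σ Δ : ℝ} (hμ : 0 < μ) (hΔ : 0 ≤ Δ) (hσμ : μ < σ)
    (hΔσ : Δ ≤ σ / 2) : σ ^ 2 / 2 ≤ (μ + Δ) * ((μ ^ 2 + σ ^ 2) / μ - (μ + Δ)) := by
  have hμΔ : μ * Δ ≤ σ ^ 2 / 2 := by nlinarith
  have hexpand : (μ + Δ) * ((μ ^ 2 + σ ^ 2) / μ - (μ + Δ))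
      = (σ ^ 2 - μ * Δ) + Δ * (σ ^ 2 - μ * Δ) / μ := by
    field_simp; ring
  have : 0 ≤ Δ * (σ ^ 2 - μ * Δ) / μ := by
    have : 0 ≤ σ ^ 2 - μ * Δ := by nlinarith
    positivity
  linarith

theorem kl_two_point_modification_le_general (μ σ Δ : ℝ) (hμ : 0 < μ) (hσ : 0 < σ) (hΔ : 0 < Δ)
    (hσμ : μ < σ) (hΔσ : Δ ≤ σ / 2) :
    let σt2 : ℝ := (μ + Δ) * ((μ ^ 2 + σ ^ 2) / μ - (μ + Δ))
    let q0 : ℝ := σ ^ 2 / (μ ^ 2 + σ ^ 2)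
    let q1 : ℝ := μ ^ 2 / (μ ^ 2 + σ ^ 2)
    let p0 : ℝ := σt2 / ((μ + Δ) ^ 2 + σt2)
    let p1 : ℝ := (μ + Δ) ^ 2 / ((μ + Δ) ^ 2 + σt2)
    q0 * Real.log (q0 / p0) + q1 * Real.log (q1 / p1) ≤ 4 * Δ ^ 2 / σ ^ 2 := by
  intro σt2 q0 q1 p0 p1
  set b := (μ ^ 2 + σ ^ 2) / μ
  have hb : 0 < b := by positivity
  have hσt2 : σ ^ 2 / 2 ≤ σt2 := sq_div_two_le_modified_variance hμ hΔ.le hσμ hΔσ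
  have hgap : 0 < b - (μ + Δ) :=
    pos_of_mul_pos_right (by linarith [pow_pos hσ 2] : 0 < σt2) (by positivity)
  obtain ⟨hq0, hq1⟩ : q0 = 1 - μ / b ∧ q1 = μ / b :=
    twoPoint_masses_of_variance_eq hμ.ne' hb.ne' (by simp only [b]; field_simp; ring)
  obtain ⟨hp0, hp1⟩ : p0 = 1 - (μ + Δ) / b ∧ p1 = (μ + Δ) / b :=
    twoPoint_masses_of_variance_eq (by positivity) hb.ne' rfl
  have hp_lt : (μ + Δ) / b < 1 := (div_lt_one hb).2 (by linarith)
  calc q0 * log (q0 / p0) + q1 * log (q1 / p1)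
      ≤ (μ / b - (μ + Δ) / b) ^ 2 / ((μ + Δ) / b * (1 - (μ + Δ) / b)) := by
        rw [hq0, hq1, hp0, hp1]
        exact bernoulli_kl_le_chiSq (by positivity)
          ((div_le_div_of_nonneg_right (by linarith) hb.le).trans hp_lt.le) (by positivity) hp_lt
    _ = Δ ^ 2 / σt2 := by
        rw [bernoulli_chiSq_div_eq (by positivity) hb.ne' hgap.ne']
        congr 1; ring
    _ ≤ Δ ^ 2 / (σ ^ 2 / 4) := div_le_div_of_nonneg_left (by positivity) (by positivity)
          (by linarith [pow_pos hσ 2])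
    _ = 4 * Δ ^ 2 / σ ^ 2 := by field_simp

/-- KL divergence bound between the two-point distribution `Q_{μ,σ}` and its `Δ`-modification
`Q^Δ_{μ,σ}` (both supported on `{0, (μ²+σ²)/μ}`):
`KL(Q ‖ Q^Δ) ≤ 4Δ²/σ²`, where `σ̃² = (μ+Δ)((μ²+σ²)/μ - (μ+Δ))`. -/
theorem kl_two_point_modification_le (μ σ Δ : ℝ) (hμ : 0 < μ) (hσ : 0 < σ) (hΔ : 0 < Δ)
    (hσμ : μ < σ) (hμσΔ : σ - Δ ≤ μ) (hΔub : Δ < (μ ^ 2 + σ ^ 2) / μ - 2 * μ)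
    (hΔσ : Δ ≤ σ / 2) :
    let σt2 : ℝ := (μ + Δ) * ((μ ^ 2 + σ ^ 2) / μ - (μ + Δ))
    let q0 : ℝ := σ ^ 2 / (μ ^ 2 + σ ^ 2)
    let q1 : ℝ := μ ^ 2 / (μ ^ 2 + σ ^ 2)
    let p0 : ℝ := σt2 / ((μ + Δ) ^ 2 + σt2)
    let p1 : ℝ := (μ + Δ) ^ 2 / ((μ + Δ) ^ 2 + σt2)
    q0 * Real.log (q0 / p0) + q1 * Real.log (q1 / p1) ≤ 4 * Δ ^ 2 / σ ^ 2 :=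
  kl_two_point_modification_le_general μ σ Δ hμ hσ hΔ hσμ hΔσ
end

section
/- Let B(t) be standard Brownian motion and fix c > 1. Then for any x > 0, P( inf_{t ∈ [1/c, 1]} B(t) ≥ x ) ≥ (2Φ(x / (2√(1 − 1/c))) − 1) · (1 − Φ(3√c·x/2)), where Φ is the standard normal CDF. -/
/-!
Split the path at `a = 1/c`. By independence of increments, `B a` is independent of the path
`t ↦ B t - B a` on `[a, 1]`, so the event `{B a > 3x/2} ∩ {B t - B a ≥ -x/2 on [a, 1]}`, which
forces `B ≥ x` on `[a, 1]`, has probability the product of the two probabilities. The first is a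
Gaussian tail. For the second, Lévy's reflection inequality on the level-`n` dyadic grid of
`[a, 1]` bounds the probability that the walk of grid values stays above `-x/2` from below by
`2Φ(x/(2√(1-a))) - 1`, uniformly in `n`; these events decrease in `n`, and by path continuity
their intersection is the event for the whole interval.
-/

open MeasureTheory ProbabilityTheory Set Filter Topology
open scoped NNReal ENNReal

section Gaussian

lemma gaussianReal_map_sqrt_mul (v : ℝ≥0) :
    (gaussianReal 0 1).map (√(v : ℝ) * ·) = gaussianReal 0 v := by
  rw [gaussianReal_map_const_mul, mul_zero]
  congr
  ext
  simp

lemma cdf_gaussianReal {v : ℝ≥0} (hv : v ≠ 0) (y : ℝ) :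
    cdf (gaussianReal 0 v) y = cdf (gaussianReal 0 1) (y / √(v : ℝ)) := by
  have hsqrt : 0 < √(v : ℝ) := Real.sqrt_pos.2 (by positivity)
  rw [cdf_eq_real, cdf_eq_real, ← gaussianReal_map_sqrt_mul,
    map_measureReal_apply (measurable_const_mul _) measurableSet_Iic]
  congr 1
  ext x
  simp [le_div_iff₀ hsqrt, mul_comm]

lemma cdf_gaussianReal_neg {v : ℝ≥0} (hv : v ≠ 0) (y : ℝ) :
    cdf (gaussianReal 0 v) (-y) = 1 - cdf (gaussianReal 0 v) y := by
  have := nullSingletonClass_gaussianReal (μ := 0) hv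
  have hsymm : (gaussianReal 0 v).map (fun x => -x) = gaussianReal 0 v := by
    rw [gaussianReal_map_neg, neg_zero]
  have hpre : (fun x : ℝ => -x) ⁻¹' Iic (-y) = Ici y := by ext; simp
  rw [cdf_eq_real, cdf_eq_real, ← hsymm, map_measureReal_apply measurable_neg measurableSet_Iic,
    hsymm, hpre, measureReal_congr Ioi_ae_eq_Ici.symm, ← compl_Iic,
    probReal_compl_eq_one_sub measurableSet_Iic]

lemma half_le_gaussianReal_Iic_zero (v : ℝ≥0) : 1 / 2 ≤ gaussianReal 0 v (Iic 0) := by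
  rcases eq_or_ne v 0 with rfl | hv
  · simp
  · have h := cdf_gaussianReal_neg hv 0
    rw [neg_zero] at h
    rw [← ofReal_cdf, show cdf (gaussianReal 0 v) 0 = 1 / 2 by linarith]
    simp

variable {Ω : Type*} [MeasurableSpace Ω] {μ : Measure Ω}

lemma measureReal_le_eq_cdf_of_map_eq_gaussianReal {X : Ω → ℝ} (hX : Measurable X)
    {v : ℝ≥0} (hv : v ≠ 0) (hlaw : μ.map X = gaussianReal 0 v) (y : ℝ) :
    μ.real {ω | X ω ≤ y} = cdf (gaussianReal 0 1) (y / √(v : ℝ)) := by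
  rw [← cdf_gaussianReal hv, cdf_eq_real, ← hlaw, map_measureReal_apply hX measurableSet_Iic]
  rfl

end Gaussian

lemma measurable_sub_of_measurable_succ_sub {Ω : Type*} {m : MeasurableSpace Ω}
    {f : ℕ → Ω → ℝ} {i j : ℕ} (hij : i ≤ j)
    (h : ∀ l, i ≤ l → l < j → Measurable[m] fun ω => f (l + 1) ω - f l ω) :
    Measurable[m] fun ω => f j ω - f i ω := by
  induction j, hij using Nat.le_induction with
  | base => simp only [sub_self]; exact measurable_const
  | succ j hij ih =>
    have hsplit : (fun ω => f (j + 1) ω - f i ω) =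
        fun ω => (f j ω - f i ω) + (f (j + 1) ω - f j ω) := by funext; ring
    rw [hsplit]
    exact (ih fun l hil hlj => h l hil (by omega)).add (h j hij (by omega))

noncomputable def dyadicGrid (a b : ℝ) (n k : ℕ) : ℝ := a + k * ((b - a) / 2 ^ n)

section DyadicGrid

variable {a b : ℝ}

@[simp] lemma dyadicGrid_zero (n : ℕ) : dyadicGrid a b n 0 = a := by simp [dyadicGrid]

lemma dyadicGrid_two_pow (n : ℕ) : dyadicGrid a b n (2 ^ n) = b := by
  simp [dyadicGrid, mul_div_cancel₀ _ (pow_ne_zero n (two_ne_zero (α := ℝ)))]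

lemma dyadicGrid_succ_two_mul (n k : ℕ) :
    dyadicGrid a b (n + 1) (2 * k) = dyadicGrid a b n k := by
  simp only [dyadicGrid, pow_succ]
  push_cast
  field_simp

lemma monotone_dyadicGrid (hab : a ≤ b) (n : ℕ) : Monotone (dyadicGrid a b n) :=
  fun k l hkl => by unfold dyadicGrid; gcongr

lemma forall_Icc_of_forall_dyadicGrid {f : ℝ → ℝ} (hf : Continuous f) (hab : a < b) {y : ℝ}
    (h : ∀ n, ∀ k ≤ 2 ^ n, y ≤ f (dyadicGrid a b n k)) : ∀ t ∈ Icc a b, y ≤ f t := by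
  rintro t ⟨hat, htb⟩
  set δ : ℕ → ℝ := fun n => (b - a) / 2 ^ n
  have hδ : ∀ n, 0 < δ n := fun n => div_pos (sub_pos.2 hab) (by positivity)
  set k : ℕ → ℕ := fun n => ⌊(t - a) / δ n⌋₊
  have hk : ∀ n, k n ≤ 2 ^ n := fun n => Nat.floor_le_of_le <| by
    rw [div_le_iff₀ (hδ n)]
    simp only [δ, Nat.cast_pow, Nat.cast_ofNat,
      mul_div_cancel₀ _ (pow_ne_zero n (two_ne_zero (α := ℝ)))]
    linarith
  have hle : ∀ n, dyadicGrid a b n (k n) ≤ t := fun n => by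
    have := Nat.floor_le (div_nonneg (sub_nonneg.2 hat) (hδ n).le)
    have := (le_div_iff₀ (hδ n)).1 this
    simp only [dyadicGrid]
    linarith
  have hge : ∀ n, t - δ n ≤ dyadicGrid a b n (k n) := fun n => by
    have := Nat.lt_floor_add_one ((t - a) / δ n)
    have := (div_lt_iff₀ (hδ n)).1 this
    simp only [dyadicGrid]
    linarith
  have hδlim : Tendsto δ atTop (𝓝 0) :=
    (tendsto_pow_atTop_atTop_of_one_lt one_lt_two).const_div_atTop (b - a)
  have hlim : Tendsto (fun n => dyadicGrid a b n (k n)) atTop (𝓝 t) :=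
    tendsto_of_tendsto_of_tendsto_of_le_of_le (by simpa using tendsto_const_nhds.sub hδlim)
      tendsto_const_nhds hge hle
  exact (isClosed_le continuous_const hf).mem_of_tendsto hlim
    (Eventually.of_forall fun n => h n (k n) (hk n))

end DyadicGrid

section Increments

variable {Ω : Type*} [MeasurableSpace Ω] {μ : Measure Ω}

theorem levy_inequality {S : ℕ → Ω → ℝ} (hS : ∀ k, Measurable (S k)) {N : ℕ}
    (hindep : ∀ k ≤ N,
      IndepFun (fun ω (j : Fin (k + 1)) => S j ω) (fun ω => S N ω - S k ω) μ)
    (hmedian : ∀ k ≤ N, 1 / 2 ≤ μ {ω | S N ω - S k ω ≤ 0}) (a : ℝ) :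
    μ {ω | ∃ k ≤ N, S k ω ≤ a} ≤ 2 * μ {ω | S N ω ≤ a} := by
  set C : ℕ → Set Ω := fun k => {ω | S k ω ≤ a ∧ ∀ j < k, a < S j ω}
  set D : ℕ → Set Ω := fun k => {ω | S N ω - S k ω ≤ 0}
  have hCm : ∀ k, MeasurableSet (C k) := fun k => by measurability
  have hDm : ∀ k, MeasurableSet (D k) := fun k => by measurability
  have hcover : {ω | ∃ k ≤ N, S k ω ≤ a} ⊆ ⋃ k ∈ Finset.range (N + 1), C k := by
    rintro ω ⟨k, hkN, hk⟩
    have hex : ∃ j, S j ω ≤ a := ⟨k, hk⟩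
    refine mem_biUnion (x := Nat.find hex) ?_ ⟨Nat.find_spec hex, fun j hj => ?_⟩
    · exact Finset.mem_range.2 (Nat.lt_succ_of_le ((Nat.find_min' hex hk).trans hkN))
    · exact lt_of_not_ge (Nat.find_min hex hj)
  have hdisj : Pairwise (Function.onFun Disjoint C) := by
    refine pairwise_disjoint_on C |>.2 fun k l hkl => disjoint_left.2 ?_
    exact fun ω hk hl => (hl.2 k hkl).not_ge hk.1
  -- reflection: after the first passage at step `k`, the remaining increment `S N - S k` is
  -- independent of the past and is `≤ 0` with probability at least `1 / 2`
  have hhalf : ∀ k ≤ N, μ (C k) ≤ 2 * μ (C k ∩ D k) := by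
    intro k hk
    have hC : C k = (fun ω (j : Fin (k + 1)) => S j ω) ⁻¹'
        {v | v (Fin.last k) ≤ a ∧ ∀ j : Fin (k + 1), (j : ℕ) < k → a < v j} := by
      ext ω
      simp only [C, mem_ofPred_eq, mem_preimage, Fin.val_last]
      exact and_congr_right fun _ =>
        ⟨fun h j hj => h j hj, fun h j hj => h ⟨j, by omega⟩ hj⟩
    have hmul : μ (C k ∩ D k) = μ (C k) * μ (D k) := by
      rw [hC]
      exact (hindep k hk).measure_inter_preimage_eq_mul _ (Iic 0) (by measurability)
        measurableSet_Iic
    calc μ (C k) = 2 * (1 / 2 * μ (C k)) := by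
          rw [← mul_assoc, ENNReal.mul_div_cancel two_ne_zero ENNReal.ofNat_ne_top, one_mul]
      _ ≤ 2 * μ (C k ∩ D k) := by rw [hmul, mul_comm (μ (C k))]; gcongr; exact hmedian k hk
  calc μ {ω | ∃ k ≤ N, S k ω ≤ a}
      ≤ ∑ k ∈ Finset.range (N + 1), μ (C k) :=
        (measure_mono hcover).trans (measure_biUnion_finset_le _ _)
    _ ≤ ∑ k ∈ Finset.range (N + 1), 2 * μ (C k ∩ D k) :=
        Finset.sum_le_sum fun k hk => hhalf k (Nat.lt_succ_iff.1 (Finset.mem_range.1 hk))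
    _ = 2 * μ (⋃ k ∈ Finset.range (N + 1), C k ∩ D k) := by
        rw [← Finset.mul_sum, measure_biUnion_finset
          (fun k _ l _ hkl => (hdisj hkl).mono inter_subset_left inter_subset_left)
          fun k _ => (hCm k).inter (hDm k)]
    _ ≤ 2 * μ {ω | S N ω ≤ a} := by
        gcongr
        refine iUnion₂_subset fun k _ ω ⟨⟨hk, _⟩, hNk⟩ => ?_
        change S N ω - S k ω ≤ 0 at hNk
        change S N ω ≤ a
        linarith

lemma indepFun_increments_before_after {B : ℝ → Ω → ℝ} (hmeas : ∀ t, Measurable (B t))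
    (hincr : ∀ (n : ℕ) (t : ℕ → ℝ), Monotone t → 0 ≤ t 0 →
      iIndepFun (fun i : Fin n => fun ω => B (t (i + 1)) ω - B (t i) ω) μ)
    {t : ℕ → ℝ} (ht : Monotone t) (ht0 : 0 ≤ t 0) (k m : ℕ) :
    IndepFun (fun ω (j : Fin (k + 1)) => B (t j) ω - B (t 0) ω)
      (fun ω (j : Fin (m + 1)) => B (t (k + j)) ω - B (t k) ω) μ := by
  set σ : Fin (k + m) → MeasurableSpace Ω :=
    fun i => MeasurableSpace.comap (fun ω => B (t (i + 1)) ω - B (t i) ω) inferInstance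
  set past := ⨆ i ∈ {i : Fin (k + m) | (i : ℕ) < k}, σ i
  set future := ⨆ i ∈ {i : Fin (k + m) | k ≤ (i : ℕ)}, σ i
  have hindep : Indep past future μ :=
    indep_iSup_of_disjoint (fun i => ((hmeas _).sub (hmeas _)).comap_le)
      (hincr (k + m) t ht ht0).iIndep
      (disjoint_left.2 fun i (hi : (i : ℕ) < k) (hi' : k ≤ (i : ℕ)) => by omega)
  have hσ : ∀ (s : Set (Fin (k + m))) (l : ℕ) (hl : l < k + m), ⟨l, hl⟩ ∈ s →
      Measurable[⨆ i ∈ s, σ i] fun ω => B (t (l + 1)) ω - B (t l) ω := fun s l hl hs =>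
    (comap_measurable _).mono (le_iSup₂ (f := fun i _ => σ i) ⟨l, hl⟩ hs) le_rfl
  -- both vectors are telescoping sums of increments from the respective block
  rw [IndepFun_iff_Indep]
  refine indep_of_indep_of_le_right (indep_of_indep_of_le_left hindep ?_) ?_
  · refine (@measurable_pi_lambda _ _ _ past _ _ fun j => ?_).comap_le
    exact measurable_sub_of_measurable_succ_sub (f := fun l => B (t l)) (Nat.zero_le _)
      fun l _ hl => hσ _ l (by omega) (by simp only [mem_ofPred_eq]; omega)
  · refine (@measurable_pi_lambda _ _ _ future _ _ fun j => ?_).comap_le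
    exact measurable_sub_of_measurable_succ_sub (f := fun l => B (t l)) (by omega)
      fun l hkl hl => hσ _ l (by omega) hkl

lemma indepFun_sub_zero_increments {B : ℝ → Ω → ℝ} (hmeas : ∀ t, Measurable (B t))
    (hincr : ∀ (n : ℕ) (t : ℕ → ℝ), Monotone t → 0 ≤ t 0 →
      iIndepFun (fun i : Fin n => fun ω => B (t (i + 1)) ω - B (t i) ω) μ)
    {u : ℕ → ℝ} (hu : Monotone u) (hu0 : 0 ≤ u 0) (m : ℕ) :
    IndepFun (fun ω => B (u 0) ω - B 0 ω)
      (fun ω (j : Fin (m + 1)) => B (u j) ω - B (u 0) ω) μ := by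
  set r : ℕ → ℝ := fun | 0 => 0 | j + 1 => u j
  have hr : Monotone r := monotone_nat_of_le_succ fun | 0 => hu0 | j + 1 => hu j.le_succ
  convert (indepFun_increments_before_after hmeas hincr hr le_rfl 1 m).comp
    (measurable_pi_apply (Fin.last 1)) measurable_id using 1
  · rfl
  · funext ω j
    simp [r, add_comm 1]

lemma ofReal_two_mul_cdf_sub_one_le_measure_forall_lt [IsProbabilityMeasure μ]
    {B : ℝ → Ω → ℝ} (hmeas : ∀ t, Measurable (B t))
    (hgauss : ∀ s t : ℝ, 0 ≤ s → s ≤ t →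
      Measure.map (fun ω => B t ω - B s ω) μ = gaussianReal 0 (Real.toNNReal (t - s)))
    (hincr : ∀ (n : ℕ) (t : ℕ → ℝ), Monotone t → 0 ≤ t 0 →
      iIndepFun (fun i : Fin n => fun ω => B (t (i + 1)) ω - B (t i) ω) μ)
    {t : ℕ → ℝ} (ht : Monotone t) (ht0 : 0 ≤ t 0) {N : ℕ} (htN : t 0 < t N) (y : ℝ) :
    ENNReal.ofReal (2 * cdf (gaussianReal 0 1) (y / √(t N - t 0)) - 1) ≤
      μ {ω | ∀ k ≤ N, -y < B (t k) ω - B (t 0) ω} := by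
  set S : ℕ → Ω → ℝ := fun k ω => B (t k) ω - B (t 0) ω
  have hS : ∀ k, Measurable (S k) := fun k => (hmeas _).sub (hmeas _)
  have hindep : ∀ k ≤ N,
      IndepFun (fun ω (j : Fin (k + 1)) => S j ω) (fun ω => S N ω - S k ω) μ := by
    intro k hk
    convert (indepFun_increments_before_after hmeas hincr ht ht0 k (N - k)).comp measurable_id
      (measurable_pi_apply (Fin.last (N - k))) using 1
    · rfl
    · funext ω
      simp only [S, Function.comp_apply, Fin.val_last, Nat.add_sub_cancel' hk]
      ring
  have hmedian : ∀ k ≤ N, 1 / 2 ≤ μ {ω | S N ω - S k ω ≤ 0} := by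
    intro k hk
    have hset :
        {ω | S N ω - S k ω ≤ 0} = (fun ω => B (t N) ω - B (t k) ω) ⁻¹' Iic 0 := by
      ext; simp [S]
    rw [hset, ← Measure.map_apply (f := fun ω => B (t N) ω - B (t k) ω)
      ((hmeas _).sub (hmeas _)) measurableSet_Iic,
      hgauss _ _ (ht0.trans (ht (Nat.zero_le k))) (ht hk)]
    exact half_le_gaussianReal_Iic_zero _
  have hlevy : μ.real {ω | ∃ k ≤ N, S k ω ≤ -y} ≤ 2 * μ.real {ω | S N ω ≤ -y} := by
    simpa [measureReal_def, ENNReal.toReal_mul] using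
      ENNReal.toReal_mono (by finiteness) (levy_inequality hS hindep hmedian (-y))
  have hend : μ.real {ω | S N ω ≤ -y} = 1 - cdf (gaussianReal 0 1) (y / √(t N - t 0)) := by
    rw [measureReal_le_eq_cdf_of_map_eq_gaussianReal (hS N) (by simpa using htN)
      (hgauss _ _ ht0 (ht (Nat.zero_le N))), Real.coe_toNNReal _ (by linarith), neg_div,
      cdf_gaussianReal_neg one_ne_zero]
  have hcompl : {ω | ∀ k ≤ N, -y < S k ω}ᶜ = {ω | ∃ k ≤ N, S k ω ≤ -y} := by
    ext; simp
  rw [← ofReal_measureReal]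
  refine ENNReal.ofReal_le_ofReal ?_
  rw [← compl_compl {ω | ∀ k ≤ N, -y < S k ω}, probReal_compl_eq_one_sub (by measurability),
    hcompl]
  linarith

theorem ofReal_mul_le_measure_lt_sub_and_forall_Icc [IsProbabilityMeasure μ]
    {B : ℝ → Ω → ℝ} (hcont : ∀ ω, Continuous fun t => B t ω)
    (hmeas : ∀ t, Measurable (B t))
    (hgauss : ∀ s t : ℝ, 0 ≤ s → s ≤ t →
      Measure.map (fun ω => B t ω - B s ω) μ = gaussianReal 0 (Real.toNNReal (t - s)))
    (hincr : ∀ (n : ℕ) (t : ℕ → ℝ), Monotone t → 0 ≤ t 0 →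
      iIndepFun (fun i : Fin n => fun ω => B (t (i + 1)) ω - B (t i) ω) μ)
    {a b : ℝ} (ha : 0 < a) (hab : a < b) (y z : ℝ) :
    ENNReal.ofReal ((2 * cdf (gaussianReal 0 1) (y / √(b - a)) - 1) *
        (1 - cdf (gaussianReal 0 1) (z / √a))) ≤
      μ {ω | z < B a ω - B 0 ω ∧ ∀ t ∈ Icc a b, -y ≤ B t ω - B a ω} := by
  set A : Set Ω := {ω | z < B a ω - B 0 ω}
  set E : ℕ → Set Ω := fun n => {ω | ∀ k ≤ 2 ^ n, -y < B (dyadicGrid a b n k) ω - B a ω}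
  have hA : μ A = ENNReal.ofReal (1 - cdf (gaussianReal 0 1) (z / √a)) := by
    have hAc : A = {ω | B a ω - B 0 ω ≤ z}ᶜ := by
      ext; simp only [A, mem_compl_iff, mem_ofPred_eq, not_le]
    rw [← ofReal_measureReal, hAc, probReal_compl_eq_one_sub (by measurability),
      measureReal_le_eq_cdf_of_map_eq_gaussianReal (X := fun ω => B a ω - B 0 ω)
        ((hmeas a).sub (hmeas 0)) (by simpa using ha) (hgauss 0 a le_rfl ha.le),
      sub_zero, Real.coe_toNNReal _ ha.le]
  have hE : ∀ n,
      ENNReal.ofReal (2 * cdf (gaussianReal 0 1) (y / √(b - a)) - 1) ≤ μ (E n) := by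
    intro n
    have h := ofReal_two_mul_cdf_sub_one_le_measure_forall_lt hmeas hgauss hincr
      (monotone_dyadicGrid hab.le n) (by simpa using ha.le) (N := 2 ^ n)
      (by simpa [dyadicGrid_two_pow] using hab) y
    rwa [dyadicGrid_zero, dyadicGrid_two_pow] at h
  have hAE : ∀ n, μ (A ∩ E n) = μ A * μ (E n) := by
    intro n
    have hind := indepFun_sub_zero_increments hmeas hincr (monotone_dyadicGrid hab.le n)
      (by simpa using ha.le) (2 ^ n)
    simp only [dyadicGrid_zero] at hind
    have hEpre : E n = (fun ω (j : Fin (2 ^ n + 1)) => B (dyadicGrid a b n j) ω - B a ω) ⁻¹'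
        {v | ∀ j, -y < v j} := by
      ext ω
      simp [E, Fin.forall_iff]
    rw [hEpre]
    exact hind.measure_inter_preimage_eq_mul _ _ measurableSet_Ioi (by measurability)
  have hanti : Antitone fun n => A ∩ E n := by
    refine antitone_nat_of_succ_le fun n ω hω => ⟨hω.1, fun k hk => ?_⟩
    rw [← dyadicGrid_succ_two_mul]
    exact hω.2 (2 * k) (by rw [pow_succ]; omega)
  have hsub : ⋂ n, A ∩ E n ⊆
      {ω | z < B a ω - B 0 ω ∧ ∀ t ∈ Icc a b, -y ≤ B t ω - B a ω} :=
    fun ω hω => ⟨(mem_iInter.1 hω 0).1, forall_Icc_of_forall_dyadicGrid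
      ((hcont ω).sub continuous_const) hab fun n k hk => ((mem_iInter.1 hω n).2 k hk).le⟩
  calc ENNReal.ofReal ((2 * cdf (gaussianReal 0 1) (y / √(b - a)) - 1) *
        (1 - cdf (gaussianReal 0 1) (z / √a)))
      = μ A * ENNReal.ofReal (2 * cdf (gaussianReal 0 1) (y / √(b - a)) - 1) := by
        rw [hA, ENNReal.ofReal_mul' (sub_nonneg.2 (cdf_le_one _ _)), mul_comm]
    _ ≤ ⨅ n, μ (A ∩ E n) := le_iInf fun n => by rw [hAE]; gcongr; exact hE n
    _ = μ (⋂ n, A ∩ E n) :=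
        (hanti.measure_iInter (fun n => by measurability) ⟨0, by finiteness⟩).symm
    _ ≤ _ := measure_mono hsub

end Increments

theorem brownian_inf_anticoncentration_general {Ω : Type*} [MeasurableSpace Ω]
    (μ : Measure Ω) [IsProbabilityMeasure μ]
    (B : ℝ → Ω → ℝ)
    (hB0 : ∀ ω, B 0 ω = 0)
    (hcont : ∀ ω, Continuous fun t => B t ω)
    (hmeas : ∀ t, Measurable (B t))
    (hgauss : ∀ s t : ℝ, 0 ≤ s → s ≤ t →
      Measure.map (fun ω => B t ω - B s ω) μ = gaussianReal 0 (Real.toNNReal (t - s)))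
    (hincr : ∀ (n : ℕ) (t : ℕ → ℝ), Monotone t → 0 ≤ t 0 →
      iIndepFun
        (fun i : Fin n => fun ω => B (t (i + 1)) ω - B (t i) ω) μ)
    (c x : ℝ) (hc : 1 < c)
    (Φ : ℝ → ℝ) (hΦ : ∀ y, Φ y = ((gaussianReal 0 1) (Set.Iic y)).toReal) :
    ENNReal.ofReal
        ((2 * Φ (x / (2 * Real.sqrt (1 - 1 / c))) - 1) * (1 - Φ (3 * Real.sqrt c * x / 2)))
      ≤ μ {ω | ∀ t ∈ Set.Icc (1 / c) 1, x ≤ B t ω} := by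
  have hc0 : 0 < c := by linarith
  have hΦ_eq : Φ = cdf (gaussianReal 0 1) :=
    funext fun y => by rw [hΦ, cdf_eq_real, measureReal_def]
  have hleft : x / (2 * √(1 - 1 / c)) = x / 2 / √(1 - 1 / c) := (div_div _ _ _).symm
  have hright : 3 * √c * x / 2 = 3 * x / 2 / √(1 / c) := by
    rw [one_div, Real.sqrt_inv, div_inv_eq_mul]; ring
  rw [hΦ_eq, hleft, hright]
  refine (ofReal_mul_le_measure_lt_sub_and_forall_Icc hcont hmeas hgauss hincr
    (one_div_pos.2 hc0) ((div_lt_one hc0).2 hc) (x / 2) (3 * x / 2)).trans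
    (measure_mono fun ω ⟨hz, hy⟩ t ht => ?_)
  have := hy t ht
  rw [hB0, sub_zero] at hz
  linarith

/-- Anti-concentration for standard Brownian motion: for `c > 1` and `x > 0`,
`P(inf_{t ∈ [1/c, 1]} B(t) ≥ x) ≥ (2Φ(x/(2√(1-1/c))) - 1)(1 - Φ(3√c x/2))`,
where `Φ` is the standard normal CDF. Standard Brownian motion is encoded via
`B 0 = 0`, continuous paths, Gaussian increments `B t - B s ~ N(0, t-s)` and
independent increments. -/
theorem brownian_inf_anticoncentration {Ω : Type*} [MeasurableSpace Ω]
    (μ : Measure Ω) [IsProbabilityMeasure μ]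
    (B : ℝ → Ω → ℝ)
    (hB0 : ∀ ω, B 0 ω = 0)
    (hcont : ∀ ω, Continuous fun t => B t ω)
    (hmeas : ∀ t, Measurable (B t))
    (hgauss : ∀ s t : ℝ, 0 ≤ s → s ≤ t →
      Measure.map (fun ω => B t ω - B s ω) μ = gaussianReal 0 (Real.toNNReal (t - s)))
    (hincr : ∀ (n : ℕ) (t : ℕ → ℝ), Monotone t → 0 ≤ t 0 →
      iIndepFun
        (fun i : Fin n => fun ω => B (t (i + 1)) ω - B (t i) ω) μ)
    (c x : ℝ) (hc : 1 < c) (hx : 0 < x)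
    (Φ : ℝ → ℝ) (hΦ : ∀ y, Φ y = ((gaussianReal 0 1) (Set.Iic y)).toReal) :
    ENNReal.ofReal
        ((2 * Φ (x / (2 * Real.sqrt (1 - 1 / c))) - 1) * (1 - Φ (3 * Real.sqrt c * x / 2)))
      ≤ μ {ω | ∀ t ∈ Set.Icc (1 / c) 1, x ≤ B t ω} :=
  brownian_inf_anticoncentration_general μ B hB0 hcont hmeas hgauss hincr c x hc Φ hΦ
end

section
/- For Gaussian two-armed bandit instances ν₁ = (N(Δ, σ₁²), N(0, σ₂²)) and ν₂ = (N(Δ, σ₁²), N(2Δ, σ₂²)) with σ₂ ≥ σ₁ > 0 and Δ = σ₂/√(2T), any policy π over horizon T satisfies E_{π ν₁} Reg(T) + E_{π ν₂} Reg(T) ≥ σ₂√T/(4√2·e), and hence max(E_{π ν₁} Reg(T), E_{π ν₂} Reg(T)) ≥ σ_sub(ν) √T /(8√2 e) for one of the two instances ν, where σ_sub(ν) denotes the standard deviation of the suboptimal arm under ν. -/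
open MeasureTheory ProbabilityTheory

/-- The law of the trajectory `((a_1, X_1), …, (a_n, X_n))` of a (possibly randomized)
bandit policy `π` interacting with arm reward distributions `ν : Fin 2 → Measure ℝ`. -/
noncomputable def trajectory (π : (n : ℕ) → (Fin n → Fin 2 × ℝ) → Measure (Fin 2))
    (ν : Fin 2 → Measure ℝ) : (n : ℕ) → Measure (Fin n → Fin 2 × ℝ)
  | 0 => Measure.dirac (fun i => i.elim0)
  | n + 1 => (trajectory π ν n).bind (fun h =>
      (π n h).bind (fun a => (ν a).map (fun x => Fin.snoc h (a, x))))

/-- The (pseudo-)regret of a trajectory for arm means `m`. -/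
noncomputable def regret (m : Fin 2 → ℝ) (T : ℕ) (h : Fin T → Fin 2 × ℝ) : ℝ :=
  ∑ t : Fin T, (max (m 0) (m 1) - m (h t).1)

open scoped ENNReal NNReal

/-!
Let `P` and `Q` be the laws of the trajectory under `ν₁` and `ν₂`. The instances differ only in the
mean of arm 1, so `Q = P.withDensity L`, where `L` is the product of the Gaussian likelihood ratios
over the rounds in which arm 1 was pulled. Conditioning round by round, `∫ √L dP` is at least
`exp (-Δ² / (2σ₂²)) ^ T = exp (-1/4)`. Writing `√L = min 1 √L * max 1 √L`, Cauchy–Schwarz and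
`∫ max 1 L dP ≤ 2` give `(∫ √L dP)² ≤ 2 ∫ min 1 L dP ≤ 2 (P A + Q Aᶜ)` for every event `A`, a
Hellinger form of the Bretagnolle–Huber inequality. The two regrets always add up to `Δ T`, so on
`A = {Reg₁ ≥ Δ T / 2}` the first is large and on `Aᶜ` the second; by Markov's inequality
`E₁ Reg + E₂ Reg ≥ (Δ T / 2) (P A + Q Aᶜ) ≥ Δ T e^{-1/2} / 4`.
-/

section Inequalities

variable {α : Type*} [MeasurableSpace α] {P : Measure α}

lemma ENNReal.sq_lintegral_mul_le {f g : α → ℝ≥0∞} (hf : AEMeasurable f P)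
    (hg : AEMeasurable g P) :
    (∫⁻ x, f x * g x ∂P) ^ 2 ≤ (∫⁻ x, f x ^ 2 ∂P) * ∫⁻ x, g x ^ 2 ∂P := by
  have h := ENNReal.lintegral_mul_le_Lp_mul_Lq P Real.HolderConjugate.two_two hf hg
  simp only [Pi.mul_apply, ENNReal.rpow_two] at h
  calc (∫⁻ x, f x * g x ∂P) ^ 2
      ≤ ((∫⁻ x, f x ^ 2 ∂P) ^ (1 / 2 : ℝ) * (∫⁻ x, g x ^ 2 ∂P) ^ (1 / 2 : ℝ)) ^ 2 := by gcongr
    _ = _ := by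
      rw [mul_pow, ← ENNReal.rpow_natCast, ← ENNReal.rpow_natCast, ← ENNReal.rpow_mul,
        ← ENNReal.rpow_mul]
      norm_num

lemma sq_lintegral_le_two_mul_add_withDensity_compl [IsProbabilityMeasure P] {W : α → ℝ≥0∞}
    (hW : Measurable W) [IsProbabilityMeasure (P.withDensity fun x => W x ^ 2)]
    {s : Set α} (hs : MeasurableSet s) :
    (∫⁻ x, W x ∂P) ^ 2 ≤ 2 * (P s + P.withDensity (fun x => W x ^ 2) sᶜ) := by
  have hmin : ∫⁻ x, min 1 (W x) ^ 2 ∂P ≤ P s + P.withDensity (fun x => W x ^ 2) sᶜ := by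
    rw [← lintegral_add_compl _ hs, withDensity_apply _ hs.compl]
    gcongr
    · exact (setLIntegral_mono measurable_const fun x _ =>
        pow_le_one₀ zero_le (min_le_left _ _)).trans (setLIntegral_one s).le
    · exact min_le_right _ _
  have hmax : ∫⁻ x, max 1 (W x) ^ 2 ∂P ≤ 2 := calc
    _ ≤ ∫⁻ x, 1 + W x ^ 2 ∂P := lintegral_mono fun x => by
      rcases le_total 1 (W x) with h | h <;> simp [h]
    _ = 2 := by
      have h₁ := measure_univ (μ := P.withDensity fun x => W x ^ 2)
      rw [withDensity_apply _ MeasurableSet.univ, Measure.restrict_univ] at h₁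
      rw [lintegral_add_left measurable_const, h₁]
      simp [one_add_one_eq_two]
  calc (∫⁻ x, W x ∂P) ^ 2 = (∫⁻ x, min 1 (W x) * max 1 (W x) ∂P) ^ 2 := by simp [min_mul_max]
    _ ≤ (∫⁻ x, min 1 (W x) ^ 2 ∂P) * ∫⁻ x, max 1 (W x) ^ 2 ∂P :=
      ENNReal.sq_lintegral_mul_le (by fun_prop) (by fun_prop)
    _ ≤ _ := by rw [mul_comm]; gcongr

lemma mul_measureReal_add_le_integral_add {Q : Measure α} [IsFiniteMeasure Q] {R₁ R₂ : α → ℝ}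
    (hR₁ : 0 ≤ R₁) (hR₂ : 0 ≤ R₂) (hi₁ : Integrable R₁ P) (hi₂ : Integrable R₂ Q) {c : ℝ}
    (hc₀ : 0 ≤ c) (hc : ∀ x, R₁ x < c → c ≤ R₂ x) :
    c * (P.real {x | c ≤ R₁ x} + Q.real {x | c ≤ R₁ x}ᶜ) ≤ ∫ x, R₁ x ∂P + ∫ x, R₂ x ∂Q := by
  have hQ : c * Q.real {x | c ≤ R₁ x}ᶜ ≤ ∫ x, R₂ x ∂Q :=
    (mul_le_mul_of_nonneg_left (measureReal_mono fun x hx => hc x (not_le.mp hx)) hc₀).trans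
      (mul_meas_ge_le_integral_of_nonneg (ae_of_all _ hR₂) hi₂ c)
  rw [mul_add]
  exact add_le_add (mul_meas_ge_le_integral_of_nonneg (ae_of_all _ hR₁) hi₁ c) hQ

end Inequalities

section Gaussian

open Real

noncomputable def gaussianShiftLogLR (μ d : ℝ) (v : ℝ≥0) (x : ℝ) : ℝ :=
  (d * (x - μ) - d ^ 2 / 2) / v

variable {μ d : ℝ} {v : ℝ≥0}

@[fun_prop]
lemma measurable_gaussianShiftLogLR : Measurable (gaussianShiftLogLR μ d v) := by
  unfold gaussianShiftLogLR; fun_prop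

lemma gaussianReal_add_eq_withDensity (hv : v ≠ 0) :
    gaussianReal (μ + d) v = (gaussianReal μ v).withDensity
      fun x => ENNReal.ofReal (exp (gaussianShiftLogLR μ d v x)) := by
  rw [gaussianReal_of_var_ne_zero _ hv, gaussianReal_of_var_ne_zero _ hv,
    ← withDensity_mul _ (measurable_gaussianPDF _ _) (by fun_prop)]
  congr with x
  rw [Pi.mul_apply, gaussianPDF, gaussianPDF, ← ENNReal.ofReal_mul (gaussianPDFReal_nonneg _ _ _),
    gaussianPDFReal, gaussianPDFReal, mul_assoc _ (exp _), ← exp_add, gaussianShiftLogLR]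
  have : (v : ℝ) ≠ 0 := NNReal.coe_ne_zero.mpr hv
  congr 3
  field_simp
  ring

lemma lintegral_exp_half_gaussianShiftLogLR (hv : v ≠ 0) :
    ∫⁻ x, ENNReal.ofReal (exp (gaussianShiftLogLR μ d v x / 2)) ∂gaussianReal μ v
      = ENNReal.ofReal (exp (-(d ^ 2 / (8 * v)))) := by
  -- the square root of the likelihood ratio of the shift `d` is a multiple of that of `d / 2`
  have hsplit (x : ℝ) : exp (gaussianShiftLogLR μ d v x / 2)
      = exp (-(d ^ 2 / (8 * v))) * exp (gaussianShiftLogLR μ (d / 2) v x) := by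
    rw [← exp_add, gaussianShiftLogLR, gaussianShiftLogLR]
    congr 1
    ring
  simp_rw [hsplit, ENNReal.ofReal_mul (exp_nonneg _)]
  rw [lintegral_const_mul _ (by fun_prop), ← setLIntegral_univ,
    ← withDensity_apply _ MeasurableSet.univ, ← gaussianReal_add_eq_withDensity hv]
  simp

end Gaussian

lemma measurable_snoc {β : Type*} [MeasurableSpace β] {n : ℕ} :
    Measurable fun q : (Fin n → β) × β => (Fin.snoc q.1 q.2 : Fin (n + 1) → β) :=
  measurable_pi_lambda _ fun i => Fin.lastCases (by simpa using measurable_snd)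
    (fun j => by simpa [Function.comp_def] using (measurable_pi_apply j).comp measurable_fst) i

section Trajectory

variable {π : (n : ℕ) → (Fin n → Fin 2 × ℝ) → Measure (Fin 2)} {ν ν' : Fin 2 → Measure ℝ}
  {n : ℕ}

lemma measurable_lintegral_lintegral_step [∀ a, SFinite (ν a)] (hπ : Measurable (π n))
    {F : (Fin n → Fin 2 × ℝ) × (Fin 2 × ℝ) → ℝ≥0∞} (hF : Measurable F) :
    Measurable fun h => ∫⁻ a, ∫⁻ x, F (h, (a, x)) ∂ν a ∂π n h := by
  simp_rw [lintegral_fintype]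
  refine Finset.measurable_sum _ fun a _ => Measurable.mul ?_
    ((Measure.measurable_coe (measurableSet_singleton a)).comp hπ)
  exact Measurable.lintegral_prod_right' (f := fun p => F (p.1, (a, p.2))) (by fun_prop)

lemma lintegral_bind_map_snoc [∀ a, SFinite (ν a)] (h : Fin n → Fin 2 × ℝ)
    {f : (Fin (n + 1) → Fin 2 × ℝ) → ℝ≥0∞} (hf : Measurable f) :
    ∫⁻ y, f y ∂((π n h).bind fun a => (ν a).map fun x => Fin.snoc h (a, x))
      = ∫⁻ a, ∫⁻ x, f (Fin.snoc h (a, x)) ∂ν a ∂π n h := by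
  rw [Measure.lintegral_bind (measurable_of_countable _).aemeasurable hf.aemeasurable]
  congr 1 with a
  exact lintegral_map hf (measurable_snoc.comp (measurable_const.prodMk
    (measurable_const.prodMk measurable_id)))

lemma lintegral_trajectory_succ [∀ a, SFinite (ν a)] (hπ : Measurable (π n))
    {f : (Fin (n + 1) → Fin 2 × ℝ) → ℝ≥0∞} (hf : Measurable f) :
    ∫⁻ h, f h ∂trajectory π ν (n + 1)
      = ∫⁻ h, ∫⁻ a, ∫⁻ x, f (Fin.snoc h (a, x)) ∂ν a ∂π n h ∂trajectory π ν n := by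
  have hstep : Measurable fun h : Fin n → Fin 2 × ℝ =>
      (π n h).bind fun a => (ν a).map fun x => (Fin.snoc h (a, x) : Fin (n + 1) → _) := by
    refine Measure.measurable_of_measurable_coe _ fun s hs => ?_
    simp_rw [← lintegral_indicator_one hs, lintegral_bind_map_snoc _ (measurable_one.indicator hs)]
    exact measurable_lintegral_lintegral_step hπ
      ((measurable_one.indicator hs).comp measurable_snoc)
  rw [trajectory, Measure.lintegral_bind hstep.aemeasurable hf.aemeasurable]
  simp_rw [lintegral_bind_map_snoc _ hf]

lemma isProbabilityMeasure_trajectory [∀ a, IsProbabilityMeasure (ν a)]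
    (hπ : ∀ n, Measurable (π n)) (hπp : ∀ n h, IsProbabilityMeasure (π n h)) (n : ℕ) :
    IsProbabilityMeasure (trajectory π ν n) := by
  induction n with
  | zero => rw [trajectory]; infer_instance
  | succ n ih =>
    constructor
    rw [← lintegral_one, lintegral_trajectory_succ (hπ n) measurable_const]
    simp

lemma trajectory_eq_withDensity [∀ a, SFinite (ν a)] (hπ : ∀ n, Measurable (π n))
    {g : Fin 2 × ℝ → ℝ≥0∞} (hg : Measurable g)
    (hν' : ∀ a, ν' a = (ν a).withDensity fun x => g (a, x)) (n : ℕ) :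
    trajectory π ν' n = (trajectory π ν n).withDensity fun h => ∏ t, g (h t) := by
  have : ∀ a, SFinite (ν' a) := fun a => hν' a ▸ inferInstance
  induction n with
  | zero => simp [trajectory]
  | succ n ih =>
    suffices ∀ f, Measurable f → ∫⁻ h, f h ∂trajectory π ν' (n + 1)
        = ∫⁻ h, (∏ t, g (h t)) * f h ∂trajectory π ν (n + 1) by
      ext s hs
      rw [withDensity_apply _ hs, ← lintegral_indicator hs, ← lintegral_indicator_one hs,
        this _ (measurable_one.indicator hs)]
      congr with h
      by_cases h ∈ s <;> simp [*]
    intro f hf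
    rw [lintegral_trajectory_succ (hπ n) hf, ih, lintegral_withDensity_eq_lintegral_mul _
      (by fun_prop) (measurable_lintegral_lintegral_step (hπ n)
        (F := fun q => f (Fin.snoc q.1 q.2)) (hf.comp measurable_snoc)),
      lintegral_trajectory_succ (hπ n) (f := fun h => (∏ t, g (h t)) * f h) (by fun_prop)]
    congr with h
    simp_rw [hν', Fin.prod_univ_castSucc, Fin.snoc_castSucc, Fin.snoc_last]
    rw [Pi.mul_apply, ← lintegral_const_mul _ (measurable_of_countable _)]
    congr with a
    have hga : Measurable fun x => g (a, x) := by fun_prop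
    have hfa : Measurable fun x => f (Fin.snoc h (a, x)) :=
      hf.comp (measurable_snoc.comp (measurable_const.prodMk (by fun_prop)))
    rw [lintegral_withDensity_eq_lintegral_mul _ hga hfa, ← lintegral_const_mul _ (hga.mul hfa)]
    simp only [Pi.mul_apply, mul_assoc]

lemma pow_le_lintegral_prod_trajectory [∀ a, SFinite (ν a)]
    (hπ : ∀ n, Measurable (π n)) (hπp : ∀ n h, IsProbabilityMeasure (π n h))
    {w : Fin 2 × ℝ → ℝ≥0∞} (hw : Measurable w) {c : ℝ≥0∞}
    (hc : ∀ a, c ≤ ∫⁻ x, w (a, x) ∂ν a) (n : ℕ) :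
    c ^ n ≤ ∫⁻ h, ∏ t, w (h t) ∂trajectory π ν n := by
  induction n with
  | zero => simp [trajectory]
  | succ n ih =>
    have hstep (h : Fin n → Fin 2 × ℝ) : (∏ t, w (h t)) * c
        ≤ ∫⁻ a, ∫⁻ x, (∏ t, w (h t)) * w (a, x) ∂ν a ∂π n h := calc
      _ = ∫⁻ _a, (∏ t, w (h t)) * c ∂π n h := by simp
      _ ≤ ∫⁻ a, (∏ t, w (h t)) * ∫⁻ x, w (a, x) ∂ν a ∂π n h := by gcongr with a; exact hc a
      _ = _ := by
        congr with a
        rw [lintegral_const_mul _ (f := fun x => w (a, x)) (by fun_prop)]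
    calc c ^ (n + 1) ≤ (∫⁻ h, ∏ t, w (h t) ∂trajectory π ν n) * c := by
          rw [pow_succ]; gcongr
      _ = ∫⁻ h, (∏ t, w (h t)) * c ∂trajectory π ν n := (lintegral_mul_const _ (by fun_prop)).symm
      _ ≤ _ := by
        rw [lintegral_trajectory_succ (hπ n) (f := fun h => ∏ t, w (h t)) (by fun_prop)]
        refine lintegral_mono fun h => (hstep h).trans_eq ?_
        simp [Fin.prod_univ_castSucc]

lemma sq_pow_le_two_mul_trajectory_add_compl
    [∀ a, IsProbabilityMeasure (ν a)] [∀ a, IsProbabilityMeasure (ν' a)]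
    (hπ : ∀ n, Measurable (π n)) (hπp : ∀ n h, IsProbabilityMeasure (π n h))
    {w : Fin 2 × ℝ → ℝ≥0∞} (hw : Measurable w)
    (hν' : ∀ a, ν' a = (ν a).withDensity fun x => w (a, x) ^ 2) {c : ℝ≥0∞}
    (hc : ∀ a, c ≤ ∫⁻ x, w (a, x) ∂ν a) (n : ℕ) {s : Set (Fin n → Fin 2 × ℝ)}
    (hs : MeasurableSet s) :
    (c ^ n) ^ 2 ≤ 2 * (trajectory π ν n s + trajectory π ν' n sᶜ) := by
  have hQ : trajectory π ν' n
      = (trajectory π ν n).withDensity fun h => (∏ t, w (h t)) ^ 2 := by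
    simp_rw [← Finset.prod_pow]
    exact trajectory_eq_withDensity hπ (g := fun p => w p ^ 2) (hw.pow_const 2) hν' n
  have := isProbabilityMeasure_trajectory hπ hπp (ν := ν) n
  have hQ₁ := isProbabilityMeasure_trajectory hπ hπp (ν := ν') n
  rw [hQ] at hQ₁ ⊢
  calc (c ^ n) ^ 2 ≤ (∫⁻ h, ∏ t, w (h t) ∂trajectory π ν n) ^ 2 := by
        gcongr; exact pow_le_lintegral_prod_trajectory hπ hπp hw hc n
    _ ≤ _ := sq_lintegral_le_two_mul_add_withDensity_compl (by fun_prop) hs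

/-- `κ` bounds the Kullback–Leibler divergences `d a ^ 2 / (2 * v a)` between the two laws of
each arm. -/
lemma exp_neg_le_trajectory_real_add_compl_of_gaussian (hπ : ∀ n, Measurable (π n))
    (hπp : ∀ n h, IsProbabilityMeasure (π n h)) {m d : Fin 2 → ℝ} {v : Fin 2 → ℝ≥0}
    (hν : ∀ a, ν a = gaussianReal (m a) (v a)) (hν' : ∀ a, ν' a = gaussianReal (m a + d a) (v a))
    (hv : ∀ a, v a ≠ 0) {κ : ℝ} (hκ : ∀ a, d a ^ 2 / (2 * v a) ≤ κ) (n : ℕ)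
    {s : Set (Fin n → Fin 2 × ℝ)} (hs : MeasurableSet s) :
    Real.exp (-(n * κ / 2)) / 2 ≤ (trajectory π ν n).real s + (trajectory π ν' n).real sᶜ := by
  have : ∀ a, IsProbabilityMeasure (ν a) := fun a => hν a ▸ inferInstance
  have : ∀ a, IsProbabilityMeasure (ν' a) := fun a => hν' a ▸ inferInstance
  set w : Fin 2 × ℝ → ℝ≥0∞ := fun p =>
    ENNReal.ofReal (Real.exp (gaussianShiftLogLR (m p.1) (d p.1) (v p.1) p.2 / 2)) with hw_def
  have hw : Measurable w := measurable_from_prod_countable_right (f := w) fun a =>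
    (measurable_gaussianShiftLogLR (μ := m a) (d := d a) (v := v a)).div_const 2
      |>.exp.ennreal_ofReal
  have hνw (a : Fin 2) : ν' a = (ν a).withDensity fun x => w (a, x) ^ 2 := by
    rw [hν, hν', gaussianReal_add_eq_withDensity (hv a)]
    congr with x
    rw [← ENNReal.ofReal_pow (Real.exp_nonneg _), ← Real.exp_nat_mul]
    congr 2
    ring
  have hc (a : Fin 2) : ENNReal.ofReal (Real.exp (-(κ / 4))) ≤ ∫⁻ x, w (a, x) ∂ν a := by
    simp only [hw_def, hν]
    rw [lintegral_exp_half_gaussianShiftLogLR (hv a)]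
    refine ENNReal.ofReal_le_ofReal (Real.exp_le_exp.mpr (neg_le_neg ?_))
    have : (0 : ℝ) < v a := NNReal.coe_pos.mpr (pos_iff_ne_zero.mpr (hv a))
    calc d a ^ 2 / (8 * v a) = d a ^ 2 / (2 * v a) / 4 := by field_simp; ring
      _ ≤ κ / 4 := by gcongr; exact hκ a
  have key := sq_pow_le_two_mul_trajectory_add_compl hπ hπp hw hνw hc n hs
  have hpow : (ENNReal.ofReal (Real.exp (-(κ / 4))) ^ n) ^ 2
      = ENNReal.ofReal (Real.exp (-(n * κ / 2))) := by
    rw [← ENNReal.ofReal_pow (Real.exp_nonneg _), ← ENNReal.ofReal_pow (by positivity),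
      ← Real.exp_nat_mul, ← Real.exp_nat_mul]
    congr 2
    push_cast
    ring
  have := isProbabilityMeasure_trajectory hπ hπp (ν := ν) n
  have := isProbabilityMeasure_trajectory hπ hπp (ν := ν') n
  rw [hpow, ENNReal.ofReal_le_iff_le_toReal (by finiteness)] at key
  rw [div_le_iff₀ two_pos]
  simpa [ENNReal.toReal_mul, ENNReal.toReal_add, measureReal_def, mul_comm] using key

end Trajectory

lemma regret_nonneg (m : Fin 2 → ℝ) (T : ℕ) (h : Fin T → Fin 2 × ℝ) : 0 ≤ regret m T h :=
  Finset.sum_nonneg fun t _ => by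
    generalize (h t).1 = a
    fin_cases a <;> simp

lemma measurable_regret (m : Fin 2 → ℝ) (T : ℕ) : Measurable (regret m T) :=
  Finset.measurable_sum _ fun t _ => measurable_const.sub
    ((measurable_of_countable m).comp (measurable_fst.comp (measurable_pi_apply t)))

lemma integrable_regret (m : Fin 2 → ℝ) (T : ℕ) (μ : Measure (Fin T → Fin 2 × ℝ))
    [IsFiniteMeasure μ] : Integrable (regret m T) μ := by
  refine integrable_finsetSum _ fun t _ => Integrable.of_bound
    (measurable_const.sub ((measurable_of_countable m).comp
      (measurable_fst.comp (measurable_pi_apply t)))).aestronglyMeasurable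
    (|max (m 0) (m 1)| + ‖m‖) (ae_of_all _ fun h => ?_)
  exact (norm_sub_le _ _).trans (add_le_add le_rfl (norm_le_pi_norm m _))

lemma regret_add_regret_eq {m m' : Fin 2 → ℝ} {T : ℕ} (hm : m 1 ≤ m 0) (hm' : m' 0 ≤ m' 1)
    (hgap : m' 1 - m' 0 = m 0 - m 1) (h : Fin T → Fin 2 × ℝ) :
    regret m T h + regret m' T h = (m 0 - m 1) * T := by
  rw [regret, regret, ← Finset.sum_add_distrib, max_eq_left hm, max_eq_right hm']
  calc _ = ∑ _t : Fin T, (m 0 - m 1) :=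
        Finset.sum_congr rfl fun t _ => by
          generalize (h t).1 = a
          fin_cases a <;> simp [hgap]
    _ = _ := by rw [Finset.sum_const, Finset.card_univ, Fintype.card_fin, nsmul_eq_mul, mul_comm]

lemma mul_exp_le_integral_regret_add_integral_regret
    {π : (n : ℕ) → (Fin n → Fin 2 × ℝ) → Measure (Fin 2)} (hπ : ∀ n, Measurable (π n))
    (hπp : ∀ n h, IsProbabilityMeasure (π n h)) {Δ : ℝ} (hΔ : 0 ≤ Δ) {v₀ v₁ : ℝ≥0}
    (hv₀ : v₀ ≠ 0) (hv₁ : v₁ ≠ 0) {ν₁ ν₂ : Fin 2 → Measure ℝ}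
    (hν₁ : ∀ a, ν₁ a = gaussianReal (![Δ, 0] a) (![v₀, v₁] a))
    (hν₂ : ∀ a, ν₂ a = gaussianReal (![Δ, 2 * Δ] a) (![v₀, v₁] a)) (T : ℕ) :
    Δ * T / 4 * Real.exp (-(Δ ^ 2 * T / v₁))
      ≤ (∫ h, regret ![Δ, 0] T h ∂trajectory π ν₁ T)
        + ∫ h, regret ![Δ, 2 * Δ] T h ∂trajectory π ν₂ T := by
  have hκ : ∀ a, ![0, 2 * Δ] a ^ 2 / (2 * ![v₀, v₁] a) ≤ 2 * Δ ^ 2 / v₁ := Fin.forall_fin_two.mpr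
    ⟨by rw [Matrix.cons_val_zero, zero_pow two_ne_zero, zero_div]; positivity,
      le_of_eq (show (2 * Δ) ^ 2 / (2 * v₁) = 2 * Δ ^ 2 / v₁ by ring)⟩
  have htest := exp_neg_le_trajectory_real_add_compl_of_gaussian hπ hπp hν₁
    (ν' := ν₂) (d := ![0, 2 * Δ]) (fun a => by fin_cases a <;> simp [hν₂])
    (Fin.forall_fin_two.mpr ⟨hv₀, hv₁⟩) hκ T
    (measurableSet_le (measurable_const (a := Δ * T / 2)) (measurable_regret ![Δ, 0] T))
  rw [show -(T * (2 * Δ ^ 2 / v₁) / 2) = -(Δ ^ 2 * T / v₁) by ring] at htest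
  have hreg (h : Fin T → Fin 2 × ℝ) :
      regret ![Δ, 0] T h + regret ![Δ, 2 * Δ] T h = Δ * T := by
    simpa using regret_add_regret_eq (m := ![Δ, 0]) (m' := ![Δ, 2 * Δ]) (show 0 ≤ Δ from hΔ)
      (show Δ ≤ 2 * Δ by linarith) (show 2 * Δ - Δ = Δ - 0 by ring) h
  have : ∀ a, IsProbabilityMeasure (ν₁ a) := fun a => hν₁ a ▸ inferInstance
  have : ∀ a, IsProbabilityMeasure (ν₂ a) := fun a => hν₂ a ▸ inferInstance
  have := isProbabilityMeasure_trajectory hπ hπp (ν := ν₁) T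
  have := isProbabilityMeasure_trajectory hπ hπp (ν := ν₂) T
  calc Δ * T / 4 * Real.exp (-(Δ ^ 2 * T / v₁))
      = Δ * T / 2 * (Real.exp (-(Δ ^ 2 * T / v₁)) / 2) := by ring
    _ ≤ _ := by gcongr
    _ ≤ _ := mul_measureReal_add_le_integral_add (regret_nonneg _ T) (regret_nonneg _ T)
      (integrable_regret _ _ _) (integrable_regret _ _ _) (by positivity)
      fun h _ => by linarith [hreg h]

/-- Regret lower bound for Gaussian two-armed bandits: for the instances
`ν₁ = (N(Δ,σ₁²), N(0,σ₂²))` and `ν₂ = (N(Δ,σ₁²), N(2Δ,σ₂²))` with `σ₂ ≥ σ₁ > 0` and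
`Δ = σ₂/√(2T)`, any policy `π` satisfies
`E_{πν₁}Reg(T) + E_{πν₂}Reg(T) ≥ σ₂√T/(4√2 e)`, hence for one of the instances the
regret is at least `σ_sub √T/(8√2 e)` where `σ_sub` is the suboptimal arm's standard
deviation (`σ₂` for `ν₁`, `σ₁` for `ν₂`). -/
theorem gaussian_two_armed_lower_bound (σ1 σ2 : ℝ) (hσ1 : 0 < σ1) (hσ12 : σ1 ≤ σ2)
    (T : ℕ) (hT : 0 < T)
    (π : (n : ℕ) → (Fin n → Fin 2 × ℝ) → Measure (Fin 2))
    (hπm : ∀ n, Measurable (π n)) (hπp : ∀ n h, IsProbabilityMeasure (π n h))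
    (Δ : ℝ) (hΔ : Δ = σ2 / Real.sqrt (2 * T))
    (ν₁ ν₂ : Fin 2 → Measure ℝ)
    (hν₁ : ν₁ = fun a => if a = 0 then gaussianReal Δ (Real.toNNReal (σ1 ^ 2))
      else gaussianReal 0 (Real.toNNReal (σ2 ^ 2)))
    (hν₂ : ν₂ = fun a => if a = 0 then gaussianReal Δ (Real.toNNReal (σ1 ^ 2))
      else gaussianReal (2 * Δ) (Real.toNNReal (σ2 ^ 2))) :
    σ2 * Real.sqrt T / (4 * Real.sqrt 2 * Real.exp 1)
        ≤ (∫ h, regret ![Δ, 0] T h ∂(trajectory π ν₁ T))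
          + (∫ h, regret ![Δ, 2 * Δ] T h ∂(trajectory π ν₂ T)) ∧
    (σ2 * Real.sqrt T / (8 * Real.sqrt 2 * Real.exp 1)
        ≤ (∫ h, regret ![Δ, 0] T h ∂(trajectory π ν₁ T)) ∨
      σ1 * Real.sqrt T / (8 * Real.sqrt 2 * Real.exp 1)
        ≤ (∫ h, regret ![Δ, 2 * Δ] T h ∂(trajectory π ν₂ T))) := by
  have hσ2 : 0 < σ2 := hσ1.trans_le hσ12
  have hTpos : (0 : ℝ) < T := Nat.cast_pos.mpr hT
  have hΔ₀ : 0 ≤ Δ := by rw [hΔ]; positivity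
  have hv (σ : ℝ) (hσ : 0 < σ) : (σ ^ 2).toNNReal ≠ 0 := by
    rw [ne_eq, Real.toNNReal_eq_zero, not_le]; positivity
  have hΔsq : Δ ^ 2 = σ2 ^ 2 / (2 * T) := by rw [hΔ, div_pow, Real.sq_sqrt (by positivity)]
  have hΔT : Δ * T = σ2 * Real.sqrt T / Real.sqrt 2 := by
    rw [hΔ, Real.sqrt_mul zero_le_two, div_mul_eq_mul_div,
      div_eq_div_iff (by positivity) (by positivity)]
    linear_combination (-σ2 * Real.sqrt 2) * Real.mul_self_sqrt hTpos.le
  have hsum := mul_exp_le_integral_regret_add_integral_regret hπm hπp hΔ₀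
    (hv σ1 hσ1) (hv σ2 hσ2) (ν₁ := ν₁) (ν₂ := ν₂)
    (fun a => by fin_cases a <;> simp [hν₁])
    (fun a => by fin_cases a <;> simp [hν₂]) T
  rw [Real.coe_toNNReal _ (sq_nonneg _), hΔsq, show σ2 ^ 2 / (2 * T) * T / σ2 ^ 2 = 1 / 2 by
    field_simp] at hsum
  have hbound : σ2 * Real.sqrt T / (4 * Real.sqrt 2 * Real.exp 1)
      ≤ Δ * T / 4 * Real.exp (-(1 / 2)) := calc
    _ = σ2 * Real.sqrt T / Real.sqrt 2 / 4 * Real.exp (-1) := by rw [Real.exp_neg]; field_simp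
    _ ≤ σ2 * Real.sqrt T / Real.sqrt 2 / 4 * Real.exp (-(1 / 2)) := by gcongr; norm_num
    _ = _ := by rw [hΔT]
  refine ⟨hbound.trans hsum, (le_or_gt _ _).imp_right fun h => ?_⟩
  have hhalf (σ : ℝ) : σ * Real.sqrt T / (8 * Real.sqrt 2 * Real.exp 1)
      = σ * Real.sqrt T / (4 * Real.sqrt 2 * Real.exp 1) / 2 := by
    rw [div_div]; ring_nf
  have : σ1 * Real.sqrt T / (4 * Real.sqrt 2 * Real.exp 1)
      ≤ σ2 * Real.sqrt T / (4 * Real.sqrt 2 * Real.exp 1) := by gcongr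
  rw [hhalf] at h ⊢
  linarith [hbound.trans hsum]
end
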